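/- arXiv:1209.6444 — 8 statements merged into one kernel-verified Lean document; each statement's English description precedes it below -/
import Mathlib

section
/- Let C be a hull operator of matroid type on a set X (a closure operator with finite supports satisfying the MacLane–Steinitz exchange property). Then a subset B ⊆ X is C-independent if and only if it is strongly C-independent. -/
/-- for a hull operator of matroid type on `X`, a subset is
`C`-independent iff it is strongly `C`-independent. -/
theorem independent_iff_strongly_independent_of_matroid_type {X : Type*}
    (C : Set X → Set X)
    (hmono : ∀ A B : Set X, A ⊆ B → A ⊆ C A ∧ C A ⊆ C B)
    (hclosure : ∀ A : Set X, C (C A) = C A)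
    (hfin : ∀ (A : Set X) (x : X), x ∈ C A → ∃ F : Finset X, ↑F ⊆ A ∧ x ∈ C ↑F)
    (hexch : ∀ (A : Set X) (x y : X), x ∉ C A → y ∉ C A →
      (x ∈ C (A ∪ {y}) ↔ y ∈ C (A ∪ {x})))
    (B : Set X) :
    (∀ b ∈ B, b ∉ C (B \ {b})) ↔
      (B ∩ C ∅ = ∅ ∧
        ∀ B₁ B₂ : Set X, B₁ ⊆ B → B₂ ⊆ B → C B₁ ∩ C B₂ = C (B₁ ∩ B₂)) := by
  classical
  have mono : ∀ {A A' : Set X}, A ⊆ A' → C A ⊆ C A' := fun h => (hmono _ _ h).2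
  have sub : ∀ A : Set X, A ⊆ C A := fun A => (hmono A A subset_rfl).1
  have cmin : ∀ {A A' : Set X}, A ⊆ C A' → C A ⊆ C A' := by
    intro A A' h
    have := mono h
    rwa [hclosure] at this
  constructor
  · intro hind
    have key : ∀ S T : Set X, S ⊆ B → T ⊆ B → ∀ x, x ∈ C S → x ∈ C T → x ∈ C (S ∩ T) := by
      intro S T hS hT x hxS hxT
      by_contra hx
      obtain ⟨G, hGS, hxG⟩ := hfin S x hxS
      have hex : ∃ n, ∃ F : Finset X, F.card = n ∧
          (↑F : Set X) ⊆ S \ T ∧ x ∈ C (S ∩ T ∪ ↑F) := by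
        refine ⟨_, G.filter (fun a => a ∉ T), rfl, ?_, ?_⟩
        · intro a ha
          simp only [Finset.coe_filter, Set.mem_setOf_eq] at ha
          exact ⟨hGS ha.1, ha.2⟩
        · refine mono (fun g hg => ?_) hxG
          by_cases hgT : g ∈ T
          · exact Or.inl ⟨hGS hg, hgT⟩
          · exact Or.inr (by simpa [hgT] using hg)
      obtain ⟨F, hcard, hFS, hxF⟩ := Nat.find_spec hex
      have hne : F.Nonempty := by
        rcases F.eq_empty_or_nonempty with h | h
        · exfalso; apply hx
          simpa [h] using hxF
        · exact h
      obtain ⟨f, hf⟩ := hne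
      set F' := F.erase f with hF'
      have hF'lt : F'.card < Nat.find hex := hcard ▸ Finset.card_erase_lt_of_mem hf
      have hxF' : x ∉ C (S ∩ T ∪ ↑F') := by
        intro h
        exact Nat.find_min hex hF'lt ⟨F', rfl, fun a ha => hFS (Finset.erase_subset _ _ ha), h⟩
      have hfST : f ∈ S \ T := hFS hf
      have hfB : f ∈ B := hS hfST.1
      set A := S ∩ T ∪ (↑F' : Set X) with hA
      have hAB : A ⊆ B \ {f} := by
        rintro a (⟨haS, haT⟩ | haF')
        · exact ⟨hS haS, fun h => hfST.2 (h ▸ haT)⟩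
        · exact ⟨hS (hFS (Finset.erase_subset _ _ haF')).1,
            Finset.ne_of_mem_erase haF'⟩
      have hfA : f ∉ C A := fun h => hind f hfB (mono hAB h)
      have hAf : A ∪ {f} = S ∩ T ∪ ↑F := by
        have : (↑F : Set X) = insert f ↑F' := by
          rw [hF', ← Finset.coe_insert, Finset.insert_erase hf]
        rw [this, hA]
        ext a
        simp only [Set.mem_union, Set.mem_insert_iff, Set.mem_singleton_iff, Finset.mem_coe]
        tauto
      have hxAf : x ∈ C (A ∪ {f}) := by rw [hAf]; exact hxF
      have hfx : f ∈ C (A ∪ {x}) := (hexch A x f hxF' hfA).1 hxAf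
      have hsub2 : A ∪ {x} ⊆ C (A ∪ T) := by
        rintro a (ha | ha)
        · exact sub _ (Or.inl ha)
        · rcases ha with rfl
          exact mono (Set.subset_union_right) hxT
      have hfAT : f ∈ C (A ∪ T) := cmin hsub2 hfx
      have hATB : A ∪ T ⊆ B \ {f} := by
        rintro a (ha | ha)
        · exact hAB ha
        · exact ⟨hT ha, fun h => hfST.2 (h ▸ ha)⟩
      exact hind f hfB (mono hATB hfAT)
    refine ⟨?_, ?_⟩
    · ext b
      simp only [Set.mem_inter_iff, Set.mem_empty_iff_false, iff_false, not_and]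
      intro hb hbC
      exact hind b hb (mono (Set.empty_subset _) hbC)
    · intro B₁ B₂ h1 h2
      apply Set.Subset.antisymm
      · rintro x ⟨hx1, hx2⟩
        exact key B₁ B₂ h1 h2 x hx1 hx2
      · exact Set.subset_inter (mono Set.inter_subset_left) (mono Set.inter_subset_right)
  · rintro ⟨hE, hI⟩ b hb hbC
    have h := hI (B \ {b}) {b} Set.diff_subset (Set.singleton_subset_iff.2 hb)
    have hinter : (B \ {b}) ∩ {b} = (∅ : Set X) := by
      ext a; simp (config := {contextual := true}) [Set.mem_diff]
    rw [hinter] at h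
    have : b ∈ C (∅ : Set X) := h ▸ ⟨hbC, sub _ rfl⟩
    have : b ∈ B ∩ C (∅ : Set X) := ⟨hb, this⟩
    rw [hE] at this
    exact this
end

section
/- In the additive group of integers ℤ with the subgroup-hull operator C (sending a subset to the subgroup it generates), the set {2, 3} is C-independent but not strongly C-independent. -/
/-- in `(ℤ, +)` with the subgroup-hull operator, `{2, 3}` is
independent but not strongly independent. -/
theorem two_three_independent_not_strongly_independent :
    (∀ b ∈ ({2, 3} : Set ℤ),
        b ∉ (AddSubgroup.closure (({2, 3} : Set ℤ) \ {b}) : Set ℤ)) ∧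
    ¬ ((({2, 3} : Set ℤ) ∩ (AddSubgroup.closure (∅ : Set ℤ) : Set ℤ) = ∅) ∧
        ∀ B₁ B₂ : Set ℤ, B₁ ⊆ {2, 3} → B₂ ⊆ {2, 3} →
          (AddSubgroup.closure B₁ : Set ℤ) ∩ (AddSubgroup.closure B₂ : Set ℤ)
            = (AddSubgroup.closure (B₁ ∩ B₂) : Set ℤ)) := by
  constructor
  · intro b hb
    rcases hb with rfl | rfl
    · have h : (({2, 3} : Set ℤ) \ {2}) = {3} := by
        ext x; simp [Set.mem_diff]
      rw [h]
      intro hmem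
      rw [SetLike.mem_coe, AddSubgroup.mem_closure_singleton] at hmem
      obtain ⟨n, hn⟩ := hmem
      rw [zsmul_eq_mul] at hn
      omega
    · have h : (({2, 3} : Set ℤ) \ {3}) = {2} := by
        ext x; simp [Set.mem_diff]
      rw [h]
      intro hmem
      rw [SetLike.mem_coe, AddSubgroup.mem_closure_singleton] at hmem
      obtain ⟨n, hn⟩ := hmem
      rw [zsmul_eq_mul] at hn
      omega
  · rintro ⟨-, h⟩
    have := h {2} {3} (by intro x hx; simp at hx; simp [hx]) (by intro x hx; simp at hx; simp [hx])
    have h6 : (6 : ℤ) ∈ (AddSubgroup.closure ({2} : Set ℤ) : Set ℤ) ∩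
        (AddSubgroup.closure ({3} : Set ℤ) : Set ℤ) := by
      constructor
      · rw [SetLike.mem_coe, AddSubgroup.mem_closure_singleton]; exact ⟨3, by norm_num⟩
      · rw [SetLike.mem_coe, AddSubgroup.mem_closure_singleton]; exact ⟨2, by norm_num⟩
    rw [this] at h6
    have hemp : ({2} : Set ℤ) ∩ {3} = ∅ := by
      ext x; simp
    rw [hemp] at h6
    simp [AddSubgroup.closure_empty] at h6
end

section
/- In the additive group of rationals ℚ with the subgroup-hull operator C, every strongly C-independent subset has at most one element; consequently every maximal strongly C-independent subset B satisfies C(B) ≠ ℚ. -/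
/-!
Any two nonzero rationals `x`, `y` have the common nonzero multiple `x.num * y.num` (since
`x.den • x = x.num`), so their cyclic subgroups meet nontrivially; strong independence of a
set containing both would force that intersection to be the hull of `{x} ∩ {y} = ∅`, i.e. `0`.
Hence strongly independent sets have at most one element, and their hulls are cyclic, while `ℚ`
is not.
-/

def StronglyIndepQ (B : Set ℚ) : Prop :=
  B ∩ (AddSubgroup.closure (∅ : Set ℚ) : Set ℚ) = ∅ ∧
  ∀ B₁ B₂ : Set ℚ, B₁ ⊆ B → B₂ ⊆ B →
    (AddSubgroup.closure B₁ : Set ℚ) ∩ (AddSubgroup.closure B₂ : Set ℚ)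
      = (AddSubgroup.closure (B₁ ∩ B₂) : Set ℚ)

open AddSubgroup

namespace Rat

lemma num_mul_mem_zmultiples (x : ℚ) (n : ℤ) : (x.num * n : ℚ) ∈ zmultiples x :=
  mem_zmultiples_iff.mpr
    ⟨n * x.den, by rw [zsmul_eq_mul, ← x.den_mul_eq_num]; push_cast; ring⟩

lemma zmultiples_ne_top (a : ℚ) : zmultiples a ≠ ⊤ := by
  intro htop
  by_cases ha : a = 0
  · obtain ⟨n, hn⟩ := mem_zmultiples_iff.mp (htop ▸ mem_top (1 : ℚ))
    simp [ha] at hn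
  · obtain ⟨n, hn⟩ := mem_zmultiples_iff.mp (htop ▸ mem_top (a / 2))
    rw [zsmul_eq_mul] at hn
    field_simp at hn
    have h2n : n * 2 = 1 := by exact_mod_cast hn
    omega

lemma closure_ne_top_of_subsingleton {B : Set ℚ} (hB : B.Subsingleton) :
    AddSubgroup.closure B ≠ ⊤ := by
  obtain ⟨a, hBa⟩ : ∃ a, B ⊆ {a} := by
    rcases hB.eq_empty_or_singleton with rfl | ⟨a, rfl⟩
    exacts [⟨0, Set.empty_subset _⟩, ⟨a, subset_rfl⟩]
  refine ne_top_of_le_ne_top (zmultiples_ne_top a) ?_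
  rw [zmultiples_eq_closure]
  exact AddSubgroup.closure_mono hBa

end Rat

namespace StronglyIndepQ

variable {B : Set ℚ}

lemma zero_notMem (hB : StronglyIndepQ B) : (0 : ℚ) ∉ B := fun h0 =>
  (Set.eq_empty_iff_forall_notMem.mp hB.1) 0 ⟨h0, zero_mem _⟩

lemma subsingleton (hB : StronglyIndepQ B) : B.Subsingleton := by
  intro x hx y hy
  by_contra hxy
  have hx0 : x ≠ 0 := fun h => hB.zero_notMem (h ▸ hx)
  have hy0 : y ≠ 0 := fun h => hB.zero_notMem (h ▸ hy)
  have hinter :=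
    hB.2 {x} {y} (Set.singleton_subset_iff.mpr hx) (Set.singleton_subset_iff.mpr hy)
  rw [(Set.singleton_inter_eq_empty (s := {y})).mpr hxy, AddSubgroup.closure_empty,
    ← zmultiples_eq_closure, ← zmultiples_eq_closure] at hinter
  have hcommon : (x.num * y.num : ℚ) ∈ (zmultiples x : Set ℚ) ∩ zmultiples y :=
    ⟨x.num_mul_mem_zmultiples _, mul_comm (x.num : ℚ) y.num ▸ y.num_mul_mem_zmultiples _⟩
  rw [hinter, SetLike.mem_coe, mem_bot] at hcommon
  exact mul_ne_zero (Rat.num_ne_zero.mpr hx0) (Rat.num_ne_zero.mpr hy0) (by exact_mod_cast hcommon)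

end StronglyIndepQ

/-- every strongly independent subset of `(ℚ, +)` has at most one
element; consequently every maximal strongly independent subset `B` has
`C(B) ≠ ℚ`. -/
theorem strongly_independent_in_rat_subsingleton :
    (∀ B : Set ℚ, StronglyIndepQ B → B.Subsingleton) ∧
    (∀ B : Set ℚ, StronglyIndepQ B →
      (∀ B' : Set ℚ, StronglyIndepQ B' → B ⊆ B' → B' = B) →
      (AddSubgroup.closure B : Set ℚ) ≠ Set.univ) :=
  ⟨fun _ hB => hB.subsingleton, fun _ hB _ huniv =>
    Rat.closure_ne_top_of_subsingleton hB.subsingleton (coe_eq_univ.mp huniv)⟩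
end

section
/- Let V be an infinite vector space over the two-element field 𝔽₂, and let G = V ⋊ GL(V) be the semidirect product of the additive group of V with its group of linear automorphisms (acting naturally on V). Identify V with the normal subgroup V × {id} of G. Then every maximal subgroup-independent subset M of V (equivalently, every basis of V over 𝔽₂) remains a maximal subgroup-independent subset of G. -/
/-- The natural action of the group of linear automorphisms of `V` on the
(multiplicative version of the) additive group of `V`. -/
def glAction (V : Type*) [AddCommGroup V] [Module (ZMod 2) V] :
    (V ≃ₗ[ZMod 2] V) →* MulAut (Multiplicative V) where
  toFun f := AddEquiv.toMultiplicative f.toAddEquiv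
  map_one' := by ext x; rfl
  map_mul' f g := by ext x; rfl

/-- The semidirect product `G = V ⋊ GL(V)`. -/
abbrev SDP (V : Type*) [AddCommGroup V] [Module (ZMod 2) V] :=
  Multiplicative V ⋊[glAction V] (V ≃ₗ[ZMod 2] V)

/-- The identification of `V` with the normal subgroup `V × {id}` of `G`. -/
def sdpInl (V : Type*) [AddCommGroup V] [Module (ZMod 2) V] (v : V) : SDP V :=
  SemidirectProduct.inl (Multiplicative.ofAdd v)

/-!
An `𝔽₂`-independent subset of `V` that is maximal is a basis, and `V` embeds in `G` as a
subgroup, so independence of `M` in `G` is inherited from `V`. For maximality, let `g = (v, f)`.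
If `f = 1`, then `g` lies in the copy of `V` and maximality of `M` in `V` applies. Otherwise `f`
moves some basis vector `b`, and some basis vector `m` occurs in `f b - b`. Conjugation by `g`
acts on the copy of `V` as `f`, and this puts `m` in the subgroup generated by `g` and the other
elements of `M`.
-/

open Set Submodule

theorem Submodule.span_zmod_eq_addSubgroup_closure {n : ℕ} {A : Type*} [AddCommGroup A]
    [Module (ZMod n) A] (s : Set A) :
    (span (ZMod n) s).toAddSubgroup = AddSubgroup.closure s :=
  le_antisymm
    (show span (ZMod n) s ≤ AddSubgroup.toZModSubmodule n (AddSubgroup.closure s) from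
      span_le.2 AddSubgroup.subset_closure)
    ((AddSubgroup.closure_le _).2 subset_span)

theorem Submodule.mem_span_zmod_iff_mem_addSubgroup_closure {n : ℕ} {A : Type*} [AddCommGroup A]
    [Module (ZMod n) A] {s : Set A} {x : A} :
    x ∈ span (ZMod n) s ↔ x ∈ AddSubgroup.closure s := by
  rw [← span_zmod_eq_addSubgroup_closure (n := n), mem_toAddSubgroup]

theorem linearIndepOn_id_iff_notMem_addSubgroup_closure {p : ℕ} [Fact p.Prime] {A : Type*}
    [AddCommGroup A] [Module (ZMod p) A] {s : Set A} :
    LinearIndepOn (ZMod p) id s ↔ ∀ b ∈ s, b ∉ AddSubgroup.closure (s \ {b}) := by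
  simp only [linearIndepOn_iff_notMem_span, id_eq, image_id',
    mem_span_zmod_iff_mem_addSubgroup_closure]

theorem Submodule.exists_sub_smul_mem_span_diff_singleton {R A : Type*} [Ring R] [AddCommGroup A]
    [Module R A] {s : Set A} {x : A} (hx : x ∈ span R s) (hx0 : x ≠ 0) :
    ∃ m ∈ s, ∃ c : R, c ≠ 0 ∧ x - c • m ∈ span R (s \ {m}) := by
  classical
  obtain ⟨c, hcs, rfl⟩ := mem_span_set.mp hx
  obtain ⟨m, hm⟩ : c.support.Nonempty :=
    Finsupp.support_nonempty_iff.mpr fun hc => hx0 (by simp [hc])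
  refine ⟨m, hcs hm, c m, Finsupp.mem_support_iff.mp hm, ?_⟩
  rw [Finsupp.sum, ← Finset.add_sum_erase _ _ hm, add_sub_cancel_left]
  exact sum_mem fun y hy => smul_mem _ _ <|
    subset_span ⟨hcs (Finset.mem_of_mem_erase hy), Finset.ne_of_mem_erase hy⟩

theorem SemidirectProduct.mul_inl_mul_inv {N G : Type*} [CommGroup N] [Group G]
    {φ : G →* MulAut N} (g : N ⋊[φ] G) (n : N) : g * inl n * g⁻¹ = inl (φ g.right n) := by
  ext <;> simp [mul_comm]

section

variable {V : Type*} [AddCommGroup V] [Module (ZMod 2) V]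

theorem sdpInl_injective : Function.Injective (sdpInl V) :=
  SemidirectProduct.inl_injective.comp Multiplicative.ofAdd.injective

theorem exists_sdpInl_eq_of_right_eq_one {g : SDP V} (hg : g.right = 1) :
    ∃ v, sdpInl V v = g := by
  rw [← SemidirectProduct.rightHom_eq_right, ← MonoidHom.mem_ker,
    ← SemidirectProduct.range_inl_eq_ker_rightHom] at hg
  obtain ⟨n, rfl⟩ := hg
  exact ⟨Multiplicative.toAdd n, rfl⟩

def vectorPart (H : Subgroup (SDP V)) : AddSubgroup V :=
  Subgroup.toAddSubgroup' (H.comap SemidirectProduct.inl)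

@[simp]
theorem mem_vectorPart {H : Subgroup (SDP V)} {v : V} : v ∈ vectorPart H ↔ sdpInl V v ∈ H :=
  Iff.rfl

theorem closure_le_vectorPart_iff {H : Subgroup (SDP V)} {S : Set V} :
    AddSubgroup.closure S ≤ vectorPart H ↔ sdpInl V '' S ⊆ H := by
  rw [AddSubgroup.closure_le, image_subset_iff]
  rfl

theorem vectorPart_closure_image_sdpInl (S : Set V) :
    vectorPart (Subgroup.closure (sdpInl V '' S)) = AddSubgroup.closure S := by
  have himage : sdpInl V '' S = SemidirectProduct.inl '' (Multiplicative.ofAdd '' S) :=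
    (image_image ..).symm
  rw [vectorPart, himage, ← MonoidHom.map_closure, Subgroup.comap_map_eq_self_of_injective
    SemidirectProduct.inl_injective, Subgroup.toAddSubgroup'_closure, preimage_image_eq _
    Multiplicative.ofAdd.injective]

theorem right_apply_mem_vectorPart {H : Subgroup (SDP V)} {g : SDP V} (hg : g ∈ H) {v : V}
    (hv : v ∈ vectorPart H) : g.right v ∈ vectorPart H := by
  have hconj : sdpInl V (g.right v) = g * sdpInl V v * g⁻¹ :=
    (SemidirectProduct.mul_inl_mul_inv g _).symm
  rw [mem_vectorPart, hconj]
  exact mul_mem (mul_mem hg hv) (inv_mem hg)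

theorem right_symm_apply_mem_vectorPart {H : Subgroup (SDP V)} {g : SDP V} (hg : g ∈ H) {v : V}
    (hv : v ∈ vectorPart H) : g.right.symm v ∈ vectorPart H :=
  right_apply_mem_vectorPart (inv_mem hg) hv

theorem image_sdpInl_independent_iff (S : Set V) :
    (∀ g ∈ sdpInl V '' S, g ∉ (Subgroup.closure (sdpInl V '' S \ {g}) : Set (SDP V))) ↔
      ∀ b ∈ S, b ∉ (AddSubgroup.closure (S \ {b}) : Set V) := by
  simp only [forall_mem_image, ← image_singleton, ← image_sdiff sdpInl_injective,
    SetLike.mem_coe, ← mem_vectorPart, vectorPart_closure_image_sdpInl]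

theorem exists_mem_closure_of_right_ne_one {M : Set V} (hM : ∀ v, v ∈ span (ZMod 2) M)
    {g : SDP V} (hg : g.right ≠ 1) :
    ∃ m ∈ M, sdpInl V m ∈ Subgroup.closure (insert g (sdpInl V '' M) \ {sdpInl V m}) := by
  obtain ⟨b, hbM, hfb⟩ : ∃ b ∈ M, g.right b ≠ b := by
    by_contra! h
    exact hg (LinearEquiv.toLinearMap_injective (LinearMap.ext_on (eq_top_iff'.2 hM) h))
  obtain ⟨m, hmM, c, hc, hm⟩ :=
    exists_sub_smul_mem_span_diff_singleton (hM (g.right b - b)) (sub_ne_zero.2 hfb)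
  obtain rfl : c = 1 := (by decide : ∀ c : ZMod 2, c ≠ 0 → c = 1) c hc
  refine ⟨m, hmM, ?_⟩
  set H := Subgroup.closure (insert g (sdpInl V '' M) \ {sdpInl V m})
  have hgH : g ∈ H :=
    Subgroup.subset_closure ⟨mem_insert _ _, fun h => hg (congrArg (·.right) h)⟩
  have hW : AddSubgroup.closure (M \ {m}) ≤ vectorPart H := by
    rw [closure_le_vectorPart_iff, image_sdiff sdpInl_injective, image_singleton]
    exact (sdiff_subset_sdiff_left (subset_insert _ _)).trans Subgroup.subset_closure
  rw [one_smul, mem_span_zmod_iff_mem_addSubgroup_closure] at hm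
  rw [← mem_vectorPart]
  by_cases hbm : b = m
  · subst hbm
    have hfb : g.right b ∈ vectorPart H := by
      simpa [sub_sub, ZModModule.add_self] using hW hm
    simpa only [LinearEquiv.symm_apply_apply] using right_symm_apply_mem_vectorPart hgH hfb
  · have hb : b ∈ vectorPart H := hW (AddSubgroup.subset_closure ⟨hbM, hbm⟩)
    have hd : g.right b - b ∈ vectorPart H := sub_mem (right_apply_mem_vectorPart hgH hb) hb
    simpa using sub_mem hd (hW hm)

end

theorem maximal_independent_in_semidirect_product_general
    (V : Type*) [AddCommGroup V] [Module (ZMod 2) V]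
    (M : Set V)
    (hind : ∀ b ∈ M, b ∉ (AddSubgroup.closure (M \ {b}) : Set V))
    (hmax : ∀ v : V, v ∉ M →
      ¬ (∀ b ∈ insert v M, b ∉ (AddSubgroup.closure (insert v M \ {b}) : Set V))) :
    (∀ g ∈ sdpInl V '' M,
        g ∉ (Subgroup.closure (sdpInl V '' M \ {g}) : Set (SDP V))) ∧
    (∀ g : SDP V, g ∉ sdpInl V '' M →
      ¬ (∀ b ∈ insert g (sdpInl V '' M),
          b ∉ (Subgroup.closure (insert g (sdpInl V '' M) \ {b}) : Set (SDP V)))) := by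
  have hli : LinearIndepOn (ZMod 2) id M := linearIndepOn_id_iff_notMem_addSubgroup_closure.2 hind
  have hspan : ∀ v, v ∈ span (ZMod 2) M := fun v => hli.mem_span_iff_id.2 fun hv =>
    by_contra fun hvM => hmax v hvM (linearIndepOn_id_iff_notMem_addSubgroup_closure.1 hv)
  refine ⟨(image_sdpInl_independent_iff M).2 hind, fun g hg hgind => ?_⟩
  by_cases hgr : g.right = 1
  · obtain ⟨v, rfl⟩ := exists_sdpInl_eq_of_right_eq_one hgr
    rw [← image_insert_eq, image_sdpInl_independent_iff] at hgind
    exact hmax v (fun hv => hg (mem_image_of_mem _ hv)) hgind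
  · obtain ⟨m, hm, hmem⟩ := exists_mem_closure_of_right_ne_one hspan hgr
    exact hgind _ (mem_insert_of_mem _ (mem_image_of_mem _ hm)) hmem

/-- for an infinite vector space `V` over `𝔽₂ = ZMod 2`, every
maximal subgroup-independent subset `M` of `V` remains maximal
subgroup-independent in the semidirect product `G = V ⋊ GL(V)`. -/
theorem maximal_independent_in_semidirect_product
    (V : Type*) [AddCommGroup V] [Module (ZMod 2) V] [Infinite V]
    (M : Set V)
    (hind : ∀ b ∈ M, b ∉ (AddSubgroup.closure (M \ {b}) : Set V))
    (hmax : ∀ v : V, v ∉ M →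
      ¬ (∀ b ∈ insert v M, b ∉ (AddSubgroup.closure (insert v M \ {b}) : Set V))) :
    (∀ g ∈ sdpInl V '' M,
        g ∉ (Subgroup.closure (sdpInl V '' M \ {g}) : Set (SDP V))) ∧
    (∀ g : SDP V, g ∉ sdpInl V '' M →
      ¬ (∀ b ∈ insert g (sdpInl V '' M),
          b ∉ (Subgroup.closure (insert g (sdpInl V '' M) \ {b}) : Set (SDP V)))) :=
  maximal_independent_in_semidirect_product_general V M hind hmax
end

section
/- Let (A, 𝒜) be a universal algebra with 𝒜 unital and stable under substitutions. A subset B ⊆ A is 𝒜-free if and only if for any two distinct operations α, β ∈ 𝒜 with equal supports S_α = S_β, and every injective function x : S_α → B, we have α(x) ≠ β(x). -/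
/-- A finitary algebraic operation on `A`: a function `A^{S} → A` where the
support `S` is a finite subset of `ω`. -/
structure Op (A : Type*) where
  supp : Finset ℕ
  op : (supp → A) → A

/-- The `𝒜`-hull of a set `B ⊆ A`: `B` together with all values of operations
of `𝒜` on tuples from `B`. -/
def hull {A : Type*} (𝒜 : Set (Op A)) (B : Set A) : Set A :=
  B ∪ ⋃ α ∈ 𝒜, {a | ∃ x : α.supp → A, (∀ i, x i ∈ B) ∧ α.op x = a}

/-- `B` is `𝒜`-independent: `b ∉ 𝒜(B \ {b})` for all `b ∈ B`. -/
def IsIndep {A : Type*} (𝒜 : Set (Op A)) (B : Set A) : Prop :=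
  ∀ b ∈ B, b ∉ hull 𝒜 (B \ {b})

/-- `B` is strongly `𝒜`-independent. -/
def IsStronglyIndep {A : Type*} (𝒜 : Set (Op A)) (B : Set A) : Prop :=
  B ∩ hull 𝒜 ∅ = ∅ ∧
  ∀ B₁ B₂ : Set A, B₁ ⊆ B → B₂ ⊆ B → hull 𝒜 B₁ ∩ hull 𝒜 B₂ = hull 𝒜 (B₁ ∩ B₂)

/-- `B` is `𝒜`-free: every function `f : B → A` (encoded as a function on `A`
whose values off `B` are irrelevant) admits `f̄ : 𝒜(B) → A` (encoded likewise)
with `f̄(α(x)) = α(f ∘ x)` for all `α ∈ 𝒜` and `x ∈ B^{S_α}`. -/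
def IsFree {A : Type*} (𝒜 : Set (Op A)) (B : Set A) : Prop :=
  ∀ f : A → A, ∃ g : A → A, ∀ α ∈ 𝒜, ∀ x : α.supp → A,
    (∀ i, x i ∈ B) → g (α.op x) = α.op (fun i => f (x i))

/-- `𝒜` is unital: it contains the identity operation `A^1 → A`. -/
def Unital {A : Type*} (𝒜 : Set (Op A)) : Prop :=
  ∃ α ∈ 𝒜, ∃ h : α.supp = {0},
    ∀ x : α.supp → A, α.op x = x ⟨0, by simp [h]⟩

/-- `𝒜` is stable under substitutions. -/
def SubstStable {A : Type*} (𝒜 : Set (Op A)) : Prop :=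
  ∀ α ∈ 𝒜, ∀ (E : Finset ℕ) (σ : α.supp → E),
    (⟨E, fun x => α.op (fun i => x (σ i))⟩ : Op A) ∈ 𝒜

/-- `𝒜` is `∅`-regular. -/
def EmptyRegular {A : Type*} (𝒜 : Set (Op A)) : Prop :=
  ∀ α ∈ 𝒜, (∀ x y : α.supp → A, α.op x = α.op y) →
    ∃ β ∈ 𝒜, β.supp = ∅ ∧ ∀ (z : β.supp → A) (x : α.supp → A), β.op z = α.op x

/-- `𝒜` is stable under compositions. -/
def CompStable {A : Type*} (𝒜 : Set (Op A)) : Prop :=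
  ∀ α ∈ 𝒜, ∀ (S : Finset ℕ) (β : α.supp → Op A),
    (∀ i, β i ∈ 𝒜) → ∀ hS : ∀ i, (β i).supp = S,
    (⟨S, fun x => α.op (fun i => (β i).op (fun j => x ⟨j.1, hS i ▸ j.2⟩))⟩ : Op A) ∈ 𝒜

/-- A clone is a unital, `∅`-regular, substitution- and composition-stable
family of operations. -/
def IsClone {A : Type*} (𝒜 : Set (Op A)) : Prop :=
  Unital 𝒜 ∧ EmptyRegular 𝒜 ∧ SubstStable 𝒜 ∧ CompStable 𝒜

section Aux
open Classical in
/-- Key lemma for the backward direction: under the separation hypothesis,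
the extension is well-defined on the hull. -/
theorem op_eq_of_sep {A : Type*} (𝒜 : Set (Op A)) (hs : SubstStable 𝒜) (B : Set A)
    (hsep : ∀ α ∈ 𝒜, ∀ β ∈ 𝒜, α ≠ β → ∀ h : α.supp = β.supp,
        ∀ x : α.supp → A, Function.Injective x → (∀ i, x i ∈ B) →
          α.op x ≠ β.op (fun j => x ⟨j.1, by rw [h]; exact j.2⟩))
    (α : Op A) (hα : α ∈ 𝒜) (β : Op A) (hβ : β ∈ 𝒜)
    (x : α.supp → A) (hxB : ∀ i, x i ∈ B)
    (y : β.supp → A) (hyB : ∀ i, y i ∈ B)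
    (hxy : α.op x = β.op y) (f : A → A) :
    α.op (fun i => f (x i)) = β.op (fun i => f (y i)) := by
  classical
  set R : Finset A := Finset.univ.image x ∪ Finset.univ.image y with hR
  have hRB : ∀ a ∈ R, a ∈ B := by
    intro a ha
    rw [hR, Finset.mem_union] at ha
    rcases ha with ha | ha <;> simp only [Finset.mem_image, Finset.mem_univ, true_and] at ha <;>
      obtain ⟨i, rfl⟩ := ha
    · exact hxB i
    · exact hyB i
  set n := R.card with hn
  set G : Finset ℕ := Finset.range n with hG
  have e : {a // a ∈ R} ≃ Fin n := R.equivFin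
  set z : {m // m ∈ G} → A := fun k => (e.symm ⟨k.1, Finset.mem_range.mp k.2⟩).1 with hz
  have hzinj : Function.Injective z := by
    intro a b hab
    have h1 : e.symm ⟨a.1, Finset.mem_range.mp a.2⟩ = e.symm ⟨b.1, Finset.mem_range.mp b.2⟩ :=
      Subtype.ext hab
    have h2 := e.symm.injective h1
    exact Subtype.ext (congrArg Fin.val h2)
  have hzB : ∀ k, z k ∈ B := fun k => hRB _ (e.symm _).2
  have hxR : ∀ i, x i ∈ R := fun i => by
    rw [hR, Finset.mem_union]; left
    exact Finset.mem_image.mpr ⟨i, Finset.mem_univ i, rfl⟩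
  have hyR : ∀ i, y i ∈ R := fun i => by
    rw [hR, Finset.mem_union]; right
    exact Finset.mem_image.mpr ⟨i, Finset.mem_univ i, rfl⟩
  set σ : α.supp → {m // m ∈ G} := fun i =>
    ⟨(e ⟨x i, hxR i⟩).1, Finset.mem_range.mpr (e ⟨x i, hxR i⟩).2⟩ with hσ
  set τ : β.supp → {m // m ∈ G} := fun i =>
    ⟨(e ⟨y i, hyR i⟩).1, Finset.mem_range.mpr (e ⟨y i, hyR i⟩).2⟩ with hτ
  have hzσ : ∀ i, z (σ i) = x i := by
    intro i
    show (e.symm ⟨(e ⟨x i, hxR i⟩).1, _⟩).1 = x i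
    have : (⟨(e ⟨x i, hxR i⟩).1, Finset.mem_range.mp (σ i).2⟩ : Fin n) = e ⟨x i, hxR i⟩ := rfl
    rw [this, Equiv.symm_apply_apply]
  have hzτ : ∀ i, z (τ i) = y i := by
    intro i
    show (e.symm ⟨(e ⟨y i, hyR i⟩).1, _⟩).1 = y i
    have : (⟨(e ⟨y i, hyR i⟩).1, Finset.mem_range.mp (τ i).2⟩ : Fin n) = e ⟨y i, hyR i⟩ := rfl
    rw [this, Equiv.symm_apply_apply]
  set α' : Op A := ⟨G, fun w => α.op (fun i => w (σ i))⟩ with hα'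
  set β' : Op A := ⟨G, fun w => β.op (fun i => w (τ i))⟩ with hβ'
  have hα'𝒜 : α' ∈ 𝒜 := hs α hα G σ
  have hβ'𝒜 : β' ∈ 𝒜 := hs β hβ G τ
  have heq : α' = β' := by
    by_contra hne
    have := hsep α' hα'𝒜 β' hβ'𝒜 hne rfl z hzinj hzB
    apply this
    show α.op (fun i => z (σ i)) = β.op (fun i => z (τ i))
    calc α.op (fun i => z (σ i)) = α.op x := by
          congr 1; funext i; exact hzσ i
      _ = β.op y := hxy
      _ = β.op (fun i => z (τ i)) := by
          congr 1; funext i; exact (hzτ i).symm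
  have hops : (fun w => α.op (fun i => w (σ i))) = (fun w : {m // m ∈ G} → A => β.op (fun i => w (τ i))) := by
    have h2 := heq
    rw [hα', hβ', Op.mk.injEq] at h2
    exact eq_of_heq h2.2
  have := congrFun hops (fun k => f (z k))
  simp only at this
  calc α.op (fun i => f (x i)) = α.op (fun i => f (z (σ i))) := by
        congr 1; funext i; rw [hzσ i]
    _ = β.op (fun i => f (z (τ i))) := this
    _ = β.op (fun i => f (y i)) := by
        congr 1; funext i; rw [hzτ i]
end Aux

/-- for a unital substitution-stable `𝒜`, a set `B` is `𝒜`-free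
iff any two distinct operations `α ≠ β` of `𝒜` with the same support take
distinct values on every injective tuple from `B`. -/
theorem free_iff_distinct_ops_separated {A : Type*} (𝒜 : Set (Op A))
    (hu : Unital 𝒜) (hs : SubstStable 𝒜) (B : Set A) :
    IsFree 𝒜 B ↔
      ∀ α ∈ 𝒜, ∀ β ∈ 𝒜, α ≠ β → ∀ h : α.supp = β.supp,
        ∀ x : α.supp → A, Function.Injective x → (∀ i, x i ∈ B) →
          α.op x ≠ β.op (fun j => x ⟨j.1, by rw [h]; exact j.2⟩) := by
  classical
  constructor
  · -- Forward: freeness implies separation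
    intro hf α hα β hβ hne h x hinj hxB heq
    by_cases hall : ∀ y : α.supp → A, α.op y = β.op (fun j => y ⟨j.1, by rw [h]; exact j.2⟩)
    · apply hne
      obtain ⟨Sα, opα⟩ := α
      obtain ⟨Sβ, opβ⟩ := β
      simp only at h
      subst h
      simp only [Op.mk.injEq, heq_eq_eq, true_and]
      funext y
      simpa using hall y
    · push_neg at hall
      obtain ⟨y, hy⟩ := hall
      set f : A → A := fun a => if hc : ∃ i, x i = a then y hc.choose else a with hfdef
      have hfx : ∀ i, f (x i) = y i := by
        intro i
        have hc : ∃ j, x j = x i := ⟨i, rfl⟩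
        have hcc : x hc.choose = x i := hc.choose_spec
        simp only [hfdef, dif_pos hc]
        exact congrArg y (hinj hcc)
      obtain ⟨g, hg⟩ := hf f
      have h1 : g (α.op x) = α.op (fun i => f (x i)) := hg α hα x hxB
      have h2 : g (β.op (fun j => x ⟨j.1, by rw [h]; exact j.2⟩)) =
          β.op (fun j => f (x ⟨j.1, by rw [h]; exact j.2⟩)) :=
        hg β hβ _ (fun j => hxB _)
      apply hy
      calc α.op y = α.op (fun i => f (x i)) := by congr 1; funext i; rw [hfx i]
        _ = g (α.op x) := h1.symm
        _ = g (β.op (fun j => x ⟨j.1, by rw [h]; exact j.2⟩)) := by rw [heq]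
        _ = β.op (fun j => f (x ⟨j.1, by rw [h]; exact j.2⟩)) := h2
        _ = β.op (fun j => y ⟨j.1, by rw [h]; exact j.2⟩) := by
            congr 1; funext j; rw [hfx]
  · -- Backward: separation implies freeness
    intro hsep f
    refine ⟨fun a => if h : ∃ α : Op A, α ∈ 𝒜 ∧ ∃ x : α.supp → A,
        (∀ i, x i ∈ B) ∧ α.op x = a
      then h.choose.op (fun i => f (h.choose_spec.2.choose i)) else a, ?_⟩
    intro α hα x hxB
    have hex : ∃ β : Op A, β ∈ 𝒜 ∧ ∃ y : β.supp → A,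
        (∀ i, y i ∈ B) ∧ β.op y = α.op x := ⟨α, hα, x, hxB, rfl⟩
    simp only [dif_pos hex]
    exact op_eq_of_sep 𝒜 hs B hsep _ hex.choose_spec.1 α hα _
      hex.choose_spec.2.choose_spec.1 x hxB hex.choose_spec.2.choose_spec.2 f
end

section
/- Let (A, 𝒜) be a unital, ∅-regular, substitution-stable universal algebra with |A| ≥ 2. Then every 𝒜-free subset B ⊆ A is strongly 𝒜-independent: B ∩ 𝒜(∅) = ∅ and 𝒜(B₁) ∩ 𝒜(B₂) = 𝒜(B₁ ∩ B₂) for all B₁, B₂ ⊆ B. -/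
section Aux

variable {A : Type*} {𝒜 : Set (Op A)}

lemma mem_hull_op {B : Set A} {α : Op A} (hα : α ∈ 𝒜) (x : α.supp → A)
    (hx : ∀ i, x i ∈ B) : α.op x ∈ hull 𝒜 B := by
  right
  simp only [Set.mem_iUnion, Set.mem_setOf_eq]
  exact ⟨α, hα, x, hx, rfl⟩

lemma hull_mono {B C : Set A} (h : B ⊆ C) : hull 𝒜 B ⊆ hull 𝒜 C := by
  rintro a (ha | ha)
  · exact Or.inl (h ha)
  · right
    simp only [Set.mem_iUnion, Set.mem_setOf_eq] at ha ⊢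
    obtain ⟨α, hα, x, hx, rfl⟩ := ha
    exact ⟨α, hα, x, fun i => h (hx i), rfl⟩

/-- Any extension `g` of `f` agrees with `f` on `B` (via the identity op). -/
lemma g_eq_f (hu : Unital 𝒜) {B : Set A} (f g : A → A)
    (hg : ∀ α ∈ 𝒜, ∀ x : α.supp → A, (∀ i, x i ∈ B) →
      g (α.op x) = α.op (fun i => f (x i)))
    {b : A} (hb : b ∈ B) : g b = f b := by
  obtain ⟨ι, hι, hsupp, hid⟩ := hu
  have h := hg ι hι (fun _ => b) (fun _ => hb)
  rwa [hid, hid] at h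

/-- If `a ∈ B` and `a` is a value of an operation on a tuple with entries in
`C ⊆ B`, then `a` occurs in that tuple; in particular `a ∈ C`. -/
lemma mem_of_op_val (hu : Unital 𝒜) {B : Set A} (hfree : IsFree 𝒜 B)
    (hA : ∃ a b : A, a ≠ b) {C : Set A} (hC : C ⊆ B) {a : A} (haB : a ∈ B)
    {β : Op A} (hβ : β ∈ 𝒜) (y : β.supp → A) (hy : ∀ j, y j ∈ C)
    (hval : β.op y = a) : a ∈ C := by
  classical
  by_contra haC
  obtain ⟨p, q, hpq⟩ := hA
  set c : A := if a = p then q else p with hc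
  have hca : c ≠ a := by
    by_cases h : a = p
    · simp [hc, h]; exact fun hq => hpq (h ▸ hq.symm)
    · simp [hc, h]; exact fun hp => h hp.symm
  set f : A → A := fun t => if t = a then c else t with hf
  obtain ⟨g, hg⟩ := hfree f
  have h1 : g a = f a := g_eq_f hu f g hg haB
  have h2 : g (β.op y) = β.op (fun j => f (y j)) := hg β hβ y fun j => hC (hy j)
  have h3 : (fun j => f (y j)) = y := by
    funext j
    have : y j ≠ a := fun h => haC (h ▸ hy j)
    simp [hf, this]
  rw [hval, h3, hval, h1] at h2
  have : f a = c := by simp [hf]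
  exact hca (this ▸ h2)

end Aux

/-- in a unital, `∅`-regular, substitution-stable universal
algebra with at least two elements, every `𝒜`-free subset is strongly
`𝒜`-independent. -/
theorem free_implies_strongly_independent {A : Type*} (𝒜 : Set (Op A))
    (hu : Unital 𝒜) (hr : EmptyRegular 𝒜) (hs : SubstStable 𝒜)
    (hA : ∃ a b : A, a ≠ b) (B : Set A) (hfree : IsFree 𝒜 B) :
    IsStronglyIndep 𝒜 B := by
  classical
  constructor
  · -- B ∩ hull 𝒜 ∅ = ∅
    ext b
    simp only [Set.mem_inter_iff, Set.mem_empty_iff_false, iff_false, not_and]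
    intro hbB hb
    rcases hb with h | h
    · exact h
    · simp only [Set.mem_iUnion, Set.mem_setOf_eq] at h
      obtain ⟨α, hα, x, hx, hval⟩ := h
      obtain ⟨p, q, hpq⟩ := hA
      set c : A := if b = p then q else p with hc
      have hcb : c ≠ b := by
        by_cases h' : b = p
        · simp [hc, h']; exact fun hq => hpq (h' ▸ hq.symm)
        · simp [hc, h']; exact fun hp => h' hp.symm
      set f : A → A := fun t => if t = b then c else t with hf
      obtain ⟨g, hg⟩ := hfree f
      have h1 : g b = f b := g_eq_f hu f g hg hbB
      have h2 : g (α.op x) = α.op (fun i => f (x i)) :=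
        hg α hα x fun i => ((hx i).elim)
      have h3 : (fun i => f (x i)) = x :=
        funext fun i => absurd (hx i) (Set.notMem_empty _)
      rw [hval, h3, hval, h1] at h2
      have : f b = c := by simp [hf]
      exact hcb (this ▸ h2)
  · intro B₁ B₂ h1 h2
    apply Set.Subset.antisymm
    · rintro a ⟨ha1, ha2⟩
      rcases ha1 with hb1 | hb1 <;> rcases ha2 with hb2 | hb2
      · exact Or.inl ⟨hb1, hb2⟩
      · -- a ∈ B₁, a is a value on a tuple from B₂
        simp only [Set.mem_iUnion, Set.mem_setOf_eq] at hb2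
        obtain ⟨β, hβ, y, hy, hval⟩ := hb2
        exact Or.inl ⟨hb1, mem_of_op_val hu hfree hA h2 (h1 hb1) hβ y hy hval⟩
      · simp only [Set.mem_iUnion, Set.mem_setOf_eq] at hb1
        obtain ⟨β, hβ, y, hy, hval⟩ := hb1
        exact Or.inl ⟨mem_of_op_val hu hfree hA h1 (h2 hb2) hβ y hy hval, hb2⟩
      · -- a is a value on tuples from B₁ and from B₂
        simp only [Set.mem_iUnion, Set.mem_setOf_eq] at hb1 hb2
        obtain ⟨α, hα, x, hx, hvalx⟩ := hb1
        obtain ⟨β, hβ, y, hy, hvaly⟩ := hb2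
        by_cases hBe : (B₁ ∩ B₂).Nonempty
        · obtain ⟨c, hcB⟩ := hBe
          set f : A → A := fun t => if t ∈ B₂ then t else c with hf
          obtain ⟨g, hg⟩ := hfree f
          have hga : g (α.op x) = α.op (fun i => f (x i)) :=
            hg α hα x fun i => h1 (hx i)
          have hgb : g (β.op y) = β.op (fun j => f (y j)) :=
            hg β hβ y fun j => h2 (hy j)
          have h3 : (fun j => f (y j)) = y := by
            funext j; simp [hf, hy j]
          rw [hvalx] at hga
          rw [hvaly, h3, hvaly] at hgb
          have hav : α.op (fun i => f (x i)) = a := by rw [← hga, hgb]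
          have hmem : ∀ i, f (x i) ∈ B₁ ∩ B₂ := by
            intro i
            by_cases hxi : x i ∈ B₂
            · simp only [hf, if_pos hxi]; exact ⟨hx i, hxi⟩
            · simp only [hf, if_neg hxi]; exact hcB
          exact hav ▸ mem_hull_op hα _ hmem
        · -- B₁ ∩ B₂ = ∅; show a is the value of a constant operation
          have hdisj : ∀ t, t ∈ B₁ → t ∉ B₂ := by
            intro t ht1 ht2
            exact hBe ⟨t, ht1, ht2⟩
          -- first: a constant op γ ∈ 𝒜 with value a
          have key : ∃ γ ∈ 𝒜, (∀ u v : γ.supp → A, γ.op u = γ.op v) ∧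
              (∀ u : γ.supp → A, γ.op u = a) := by
            by_cases hne : Nonempty α.supp
            · haveI := hne
              set σ : α.supp → α.supp := fun i => Function.invFun x (x i) with hσ
              refine ⟨⟨α.supp, fun u => α.op (fun i => u (σ i))⟩,
                hs α hα α.supp σ, ?_, ?_⟩
              · intro u v
                have hcu : ∀ u : α.supp → A, α.op (fun i => u (σ i)) = a := by
                  intro u
                  set f : A → A :=
                    fun t => if h : ∃ i, x i = t then u (σ h.choose) else t with hf
                  obtain ⟨g, hg⟩ := hfree f
                  have hga : g (α.op x) = α.op (fun i => f (x i)) :=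
                    hg α hα x fun i => h1 (hx i)
                  have hgb : g (β.op y) = β.op (fun j => f (y j)) :=
                    hg β hβ y fun j => h2 (hy j)
                  have h3 : (fun j => f (y j)) = y := by
                    funext j
                    have hnex : ¬ ∃ i, x i = y j := by
                      rintro ⟨i, hi⟩
                      exact hdisj (y j) (hi ▸ hx i) (hy j)
                    simp only [hf]
                    exact dif_neg hnex
                  have h4 : (fun i => f (x i)) = fun i => u (σ i) := by
                    funext i
                    have hex : ∃ j, x j = x i := ⟨i, rfl⟩
                    simp only [hf]
                    rw [dif_pos hex]
                    congr 1
                    simp only [hσ]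
                    rw [hex.choose_spec]
                  rw [hvalx] at hga
                  rw [hvaly, h3, hvaly] at hgb
                  rw [h4] at hga
                  rw [← hga, hgb]
                exact (hcu u).trans (hcu v).symm
              · intro u
                -- same computation
                set f : A → A :=
                  fun t => if h : ∃ i, x i = t then u (σ h.choose) else t with hf
                obtain ⟨g, hg⟩ := hfree f
                have hga : g (α.op x) = α.op (fun i => f (x i)) :=
                  hg α hα x fun i => h1 (hx i)
                have hgb : g (β.op y) = β.op (fun j => f (y j)) :=
                  hg β hβ y fun j => h2 (hy j)
                have h3 : (fun j => f (y j)) = y := by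
                  funext j
                  have hnex : ¬ ∃ i, x i = y j := by
                    rintro ⟨i, hi⟩
                    exact hdisj (y j) (hi ▸ hx i) (hy j)
                  simp only [hf]
                  exact dif_neg hnex
                have h4 : (fun i => f (x i)) = fun i => u (σ i) := by
                  funext i
                  have hex : ∃ j, x j = x i := ⟨i, rfl⟩
                  simp only [hf]
                  rw [dif_pos hex]
                  congr 1
                  simp only [hσ]
                  rw [hex.choose_spec]
                rw [hvalx] at hga
                rw [hvaly, h3, hvaly] at hgb
                rw [h4] at hga
                rw [← hga, hgb]
            · refine ⟨α, hα, ?_, ?_⟩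
              · intro u v
                congr 1
                funext i
                exact absurd ⟨i⟩ hne
              · intro u
                have : u = x := funext fun i => absurd ⟨i⟩ hne
                rw [this, hvalx]
          obtain ⟨γ, hγ, hconst, hvalγ⟩ := key
          obtain ⟨δ, hδ, hδsupp, hδval⟩ := hr γ hγ hconst
          have hda : δ.op (fun _ => a) = a := by
            rw [hδval (fun _ => a) (fun _ => a), hvalγ]
          have : δ.op (fun _ => a) ∈ hull 𝒜 (B₁ ∩ B₂) := by
            apply mem_hull_op hδ
            intro i
            exact absurd i.2 (Finset.eq_empty_iff_forall_notMem.mp hδsupp _)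
          rwa [hda] at this
    · intro a ha
      exact ⟨hull_mono Set.inter_subset_left ha,
        hull_mono Set.inter_subset_right ha⟩
end

section
/- In the algebra c₀₀ of finitely supported real sequences with the clone 𝒜̄ generated by addition, pointwise multiplication, and real scalar multiplications, no non-empty subset B ⊆ c₀₀ is 𝒜̄-free. In particular, for every b ∈ c₀₀ there is a non-zero polynomial p(x) = Σ_{i=0}^{n} λ_i x^{i+1} with p(b) = 0, while p is not identically zero on c₀₀. -/
/-- `c₀₀`: finitely supported real sequences. -/
abbrev C00 := {x : ℕ → ℝ // (Function.support x).Finite}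

/-- Pointwise addition as an operation on `c₀₀` with support `{0, 1}`. -/
def addOp : Op C00 :=
  ⟨{0, 1}, fun x =>
    ⟨fun n => (x ⟨0, by simp⟩).1 n + (x ⟨1, by simp⟩).1 n,
      ((x ⟨0, by simp⟩).2.union (x ⟨1, by simp⟩).2).subset
        (Function.support_add _ _)⟩⟩

/-- Pointwise multiplication as an operation on `c₀₀` with support `{0, 1}`. -/
def mulOp : Op C00 :=
  ⟨{0, 1}, fun x =>
    ⟨fun n => (x ⟨0, by simp⟩).1 n * (x ⟨1, by simp⟩).1 n,
      (x ⟨0, by simp⟩).2.subset fun n hn => by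
        simp only [Function.mem_support] at hn ⊢
        exact fun h => hn (by rw [h, zero_mul])⟩⟩

/-- Scalar multiplication by `t` as a unary operation on `c₀₀`. -/
def smulOp (t : ℝ) : Op C00 :=
  ⟨{0}, fun x =>
    ⟨fun n => t * (x ⟨0, by simp⟩).1 n,
      (x ⟨0, by simp⟩).2.subset fun n hn => by
        simp only [Function.mem_support] at hn ⊢
        exact fun h => hn (by rw [h, mul_zero])⟩⟩

/-- The operation family `𝒜 = {+, ·} ∪ {αₜ : t ∈ ℝ}` on `c₀₀`. -/
def c00Ops : Set (Op C00) := {addOp, mulOp} ∪ Set.range smulOp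

/-- The zero element of `c₀₀`. -/
def czero : C00 := ⟨fun _ => 0, by simp⟩

/-- The value of the polynomial `p(x) = Σ_{i=0}^{n} λ_i x^{i+1}` (with zero
constant term, applied pointwise) at an element of `c₀₀`. -/
def ppoly (n : ℕ) (lam : Fin (n + 1) → ℝ) (b : C00) : C00 :=
  ⟨fun m => ∑ i : Fin (n + 1), lam i * (b.1 m) ^ (i.1 + 1),
    b.2.subset fun m hm => by
      simp only [Function.mem_support] at hm ⊢
      intro h
      exact hm (Finset.sum_eq_zero fun i _ => by simp [h])⟩

/-! If `b` has support `F`, the vectors `b, b², …, b^{|F|+1}` lie in the `|F|`-dimensional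
space `ℝ^F`, so some non-zero `p(x) = Σ λ_i x^{i+1}` kills `b`; as a non-zero real polynomial,
`p` does not vanish at some `t`, hence not at `t·e₀`. The clone contains the unary operations
`p` and `0` (the zero polynomial), which agree at `b`; a homomorphic extension of `b ↦ t·e₀`
would then have to send `p(b) = 0` both to `p(t·e₀) ≠ 0` and to `0`. -/

def unOp {A : Type*} (p : A → A) : Op A :=
  ⟨{0}, fun x => p (x ⟨0, by simp⟩)⟩

section Clone

variable {A : Type*} {𝒜 : Set (Op A)}

theorem Unital.unOp_id_mem (h : Unital 𝒜) : unOp id ∈ 𝒜 := by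
  obtain ⟨⟨S, op⟩, hα, hS, hop⟩ := h
  dsimp only at hS hop
  subst hS
  rwa [show unOp id = ⟨{0}, op⟩ from congrArg (Op.mk {0}) (funext fun x => (hop x).symm)]

theorem CompStable.unOp_comp_mem (h : CompStable 𝒜) {α : Op A} (hα : α ∈ 𝒜)
    {p : α.supp → A → A} (hp : ∀ i, unOp (p i) ∈ 𝒜) :
    unOp (fun a => α.op fun i => p i a) ∈ 𝒜 :=
  h α hα {0} (fun i => unOp (p i)) hp fun _ => rfl

/-- The extension of `b ↦ y` would map `p b = q b` to both `p y` and `q y`. -/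
theorem not_isFree_of_unOp_mem {B : Set A} {b y : A} (hb : b ∈ B) {p q : A → A}
    (hp : unOp p ∈ 𝒜) (hq : unOp q ∈ 𝒜) (hpq : p b = q b) (hpqy : p y ≠ q y) :
    ¬ IsFree 𝒜 B := by
  intro hfree
  obtain ⟨g, hg⟩ := hfree fun _ => y
  have hgp : g (p b) = p y := hg _ hp (fun _ => b) fun _ => hb
  have hgq : g (q b) = q y := hg _ hq (fun _ => b) fun _ => hb
  exact hpqy (hgp.symm.trans (hpq ▸ hgq))

end Clone

section C00Clone

variable {𝒜 : Set (Op C00)} {p q r : C00 → C00}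

theorem unOp_mem_of_add (h : CompStable 𝒜) (hadd : addOp ∈ 𝒜)
    (hp : unOp p ∈ 𝒜) (hq : unOp q ∈ 𝒜) (hr : ∀ a m, (r a).1 m = (p a).1 m + (q a).1 m) :
    unOp r ∈ 𝒜 := by
  convert h.unOp_comp_mem hadd (p := fun i => if i.1 = 0 then p else q)
    fun i => by split <;> assumption
  ext m
  simp [addOp, hr]

theorem unOp_mem_of_mul (h : CompStable 𝒜) (hmul : mulOp ∈ 𝒜)
    (hp : unOp p ∈ 𝒜) (hq : unOp q ∈ 𝒜) (hr : ∀ a m, (r a).1 m = (p a).1 m * (q a).1 m) :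
    unOp r ∈ 𝒜 := by
  convert h.unOp_comp_mem hmul (p := fun i => if i.1 = 0 then p else q)
    fun i => by split <;> assumption
  ext m
  simp [mulOp, hr]

theorem unOp_mem_of_smul (h : CompStable 𝒜) {t : ℝ} (hsmul : smulOp t ∈ 𝒜)
    (hp : unOp p ∈ 𝒜) (hr : ∀ a m, (r a).1 m = t * (p a).1 m) :
    unOp r ∈ 𝒜 := by
  convert h.unOp_comp_mem hsmul (p := fun _ => p) fun _ => hp
  ext m
  simp [smulOp, hr]

end C00Clone

section Ppoly

open Polynomial

noncomputable def ppolyPoly (n : ℕ) (lam : Fin (n + 1) → ℝ) : ℝ[X] :=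
  ∑ i, C (lam i) * X ^ (i.1 + 1)

theorem ppoly_apply (n : ℕ) (lam : Fin (n + 1) → ℝ) (a : C00) (m : ℕ) :
    (ppoly n lam a).1 m = (ppolyPoly n lam).eval (a.1 m) := by
  simp [ppoly, ppolyPoly, eval_finsetSum]

theorem ppolyPoly_ne_zero {n : ℕ} {lam : Fin (n + 1) → ℝ} (hlam : lam ≠ 0) :
    ppolyPoly n lam ≠ 0 := by
  obtain ⟨i, hi⟩ := Function.ne_iff.1 hlam
  have hcoeff : (ppolyPoly n lam).coeff (i.1 + 1) = lam i := by
    simp [ppolyPoly, Fin.val_inj]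
  exact fun h => hi (by simpa [h] using hcoeff.symm)

theorem ppoly_zero (n : ℕ) (a : C00) : ppoly n 0 a = czero :=
  Subtype.ext <| funext fun m => by simp [ppoly, czero]

theorem exists_ppoly_ne_czero {n : ℕ} {lam : Fin (n + 1) → ℝ} (hlam : lam ≠ 0) :
    ∃ y : C00, ppoly n lam y ≠ czero := by
  obtain ⟨t, ht⟩ : ∃ t, (ppolyPoly n lam).eval t ≠ 0 := by
    by_contra! h
    exact ppolyPoly_ne_zero hlam (zero_of_eval_zero _ h)
  refine ⟨⟨Pi.single 0 t, (Set.finite_singleton 0).subset Pi.support_single_subset⟩, fun h => ?_⟩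
  have h0 := congrFun (congrArg Subtype.val h) 0
  simp only [ppoly_apply, Pi.single_eq_same] at h0
  exact ht h0

theorem exists_ppoly_eq_czero (b : C00) :
    ∃ (n : ℕ) (lam : Fin (n + 1) → ℝ), lam ≠ 0 ∧ ppoly n lam b = czero := by
  set F := b.2.toFinset
  set v : Fin (F.card + 1) → F → ℝ := fun i m => b.1 m ^ (i.1 + 1)
  have hdep : ¬ LinearIndependent ℝ v := fun h => by
    simpa using h.fintype_card_le_finrank
  obtain ⟨lam, hsum, i, hi⟩ := Fintype.not_linearIndependent_iff.1 hdep
  refine ⟨F.card, lam, Function.ne_iff.2 ⟨i, hi⟩, Subtype.ext <| funext fun m => ?_⟩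
  by_cases hm : b.1 m = 0
  · simp [ppoly, czero, hm]
  · simpa [v, ppoly, czero, Finset.sum_apply] using congrFun hsum ⟨m, b.2.mem_toFinset.2 hm⟩

variable {𝒜 : Set (Op C00)}

/-- Induction by Horner's step `Σ_{i ≤ n+1} λ_i x^{i+1} = λ₀ x + x · Σ_{i ≤ n} λ_{i+1} x^{i+1}`,
where both summands are again of the form `ppoly`. -/
theorem unOp_ppoly_mem (hunital : Unital 𝒜) (hcomp : CompStable 𝒜) (hsub : c00Ops ⊆ 𝒜)
    (n : ℕ) (lam : Fin (n + 1) → ℝ) : unOp (ppoly n lam) ∈ 𝒜 := by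
  have hid := hunital.unOp_id_mem
  have hsmul (t : ℝ) : smulOp t ∈ 𝒜 := hsub (Or.inr ⟨t, rfl⟩)
  induction n with
  | zero => exact unOp_mem_of_smul hcomp (hsmul (lam 0)) hid fun a m => by simp [ppoly]
  | succ n ih =>
    have hlin : unOp (ppoly 0 fun _ => lam 0) ∈ 𝒜 :=
      unOp_mem_of_smul hcomp (hsmul (lam 0)) hid fun a m => by simp [ppoly]
    have hshift : unOp (ppoly (n + 1) (Fin.cons 0 (Fin.tail lam))) ∈ 𝒜 :=
      unOp_mem_of_mul hcomp (hsub (Or.inl (Or.inr rfl))) hid (ih (Fin.tail lam))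
        fun a m => by
          simp only [ppoly, id]
          rw [Fin.sum_univ_succ, Finset.mul_sum, Fin.cons_zero, zero_mul, zero_add]
          exact Finset.sum_congr rfl fun i _ => by simp only [Fin.cons_succ, Fin.val_succ]; ring
    exact unOp_mem_of_add hcomp (hsub (Or.inl (Or.inl rfl))) hlin hshift
      fun a m => by simp [ppoly, Fin.sum_univ_succ, Fin.tail]

end Ppoly

theorem no_nonempty_free_subset_of_c00_general
    (𝒜' : Set (Op C00)) (hclone : IsClone 𝒜') (hsub : c00Ops ⊆ 𝒜') :
    (∀ B : Set C00, B.Nonempty → ¬ IsFree 𝒜' B) ∧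
    (∀ b : C00, ∃ (n : ℕ) (lam : Fin (n + 1) → ℝ),
      lam ≠ 0 ∧ ppoly n lam b = czero ∧ ∃ y : C00, ppoly n lam y ≠ czero) := by
  refine ⟨fun B ⟨b, hb⟩ => ?_, fun b => ?_⟩
  · obtain ⟨n, lam, hlam, hb0⟩ := exists_ppoly_eq_czero b
    obtain ⟨y, hy⟩ := exists_ppoly_ne_czero hlam
    have hpoly := unOp_ppoly_mem hclone.1 hclone.2.2.2 hsub n
    exact not_isFree_of_unOp_mem hb (hpoly lam) (hpoly 0) (by rw [hb0, ppoly_zero])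
      (by rwa [ppoly_zero])
  · obtain ⟨n, lam, hlam, hb0⟩ := exists_ppoly_eq_czero b
    exact ⟨n, lam, hlam, hb0, exists_ppoly_ne_czero hlam⟩

/-- in `c₀₀` with the clone `𝒜'` generated by addition,
pointwise multiplication and real scalar multiplications, no non-empty set is
`𝒜'`-free; in particular each `b ∈ c₀₀` is a zero of a non-zero polynomial
`p(x) = Σ λ_i x^{i+1}` which is not identically zero on `c₀₀`. -/
theorem no_nonempty_free_subset_of_c00
    (𝒜' : Set (Op C00)) (hclone : IsClone 𝒜') (hsub : c00Ops ⊆ 𝒜')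
    (hmin : ∀ 𝒞 : Set (Op C00), IsClone 𝒞 → c00Ops ⊆ 𝒞 → 𝒜' ⊆ 𝒞) :
    (∀ B : Set C00, B.Nonempty → ¬ IsFree 𝒜' B) ∧
    (∀ b : C00, ∃ (n : ℕ) (lam : Fin (n + 1) → ℝ),
      lam ≠ 0 ∧ ppoly n lam b = czero ∧ ∃ y : C00, ppoly n lam y ≠ czero) :=
  no_nonempty_free_subset_of_c00_general 𝒜' hclone hsub
end

section
/- For every infinite set X, the power 2^X = (2^X, ℬ^X) of the Boolean clone contains a ℬ^X-free subset B ⊆ 2^X of cardinality |B| = 2^{|X|}. -/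
/-- The `X`-th power of an operation `α` on `A`: it acts coordinatewise on
`A^X`. -/
def powOp {A : Type*} (X : Type*) (α : Op A) : Op (X → A) :=
  ⟨α.supp, fun f x => α.op fun i => f i x⟩


open Classical in
noncomputable def chi {X : Type*} (e : X ≃ Finset X × Finset (Finset X)) (S : Set X) :
    X → Fin 2 :=
  fun x => if (e x).1.filter (· ∈ S) ∈ (e x).2 then 1 else 0

open Classical in
lemma chi_injective {X : Type*} (e : X ≃ Finset X × Finset (Finset X)) :
    Function.Injective (chi e) := by
  have key : ∀ S T : Set X, ∀ a : X, a ∈ S → a ∉ T → chi e S ≠ chi e T := by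
    intro S T a haS haT h
    have := congrFun h (e.symm ({a}, {{a}}))
    simp only [chi, Equiv.apply_symm_apply] at this
    rw [if_pos, if_neg] at this
    · exact one_ne_zero this
    · simp only [Finset.mem_singleton]
      intro hmem
      have : a ∈ ({a} : Finset X).filter (· ∈ T) := by
        rw [hmem]; exact Finset.mem_singleton_self a
      exact haT (Finset.mem_filter.mp this).2
    · simp only [Finset.mem_singleton]
      ext b; simp only [Finset.mem_filter, Finset.mem_singleton]
      constructor
      · rintro ⟨rfl, -⟩; rfl
      · rintro rfl; exact ⟨rfl, haS⟩
  intro S T h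
  by_contra hne
  obtain ⟨a, ha⟩ : ∃ a, ¬(a ∈ S ↔ a ∈ T) := by
    by_contra hc; push_neg at hc
    exact hne (Set.ext fun a => hc a)
  rw [iff_iff_implies_and_implies, not_and_or] at ha
  push_neg at ha
  rcases ha with ⟨haS, haT⟩ | ⟨haT, haS⟩
  · exact key S T a haS haT h
  · exact key T S a haT haS h.symm

open Classical in
lemma chi_sep {X : Type*} [Nonempty X] (e : X ≃ Finset X × Finset (Finset X))
    (t : Finset (Set X)) (ε : Set X → Fin 2) :
    ∃ q : X, ∀ S ∈ t, chi e S q = ε S := by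
  classical
  set w : Set X → Set X → X := fun S T =>
    if h : ∃ a, ¬(a ∈ S ↔ a ∈ T) then h.choose else Classical.arbitrary X with hw
  set F : Finset X := (t ×ˢ t).image (fun p => w p.1 p.2) with hF
  have sepF : ∀ S ∈ t, ∀ T ∈ t, F.filter (· ∈ S) = F.filter (· ∈ T) → S = T := by
    intro S hS T hT hfil
    by_contra hne
    have hex : ∃ a, ¬(a ∈ S ↔ a ∈ T) := by
      by_contra hc; push_neg at hc
      exact hne (Set.ext fun a => hc a)
    have hwa : w S T = hex.choose := by rw [hw]; simp only [dif_pos hex]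
    have hspec : ¬(w S T ∈ S ↔ w S T ∈ T) := by rw [hwa]; exact hex.choose_spec
    have hmemF : w S T ∈ F := Finset.mem_image.mpr
      ⟨(S, T), Finset.mem_product.mpr ⟨hS, hT⟩, rfl⟩
    apply hspec
    constructor
    · intro h
      have : w S T ∈ F.filter (· ∈ T) := hfil ▸ Finset.mem_filter.mpr ⟨hmemF, h⟩
      exact (Finset.mem_filter.mp this).2
    · intro h
      have : w S T ∈ F.filter (· ∈ S) := hfil.symm ▸ Finset.mem_filter.mpr ⟨hmemF, h⟩
      exact (Finset.mem_filter.mp this).2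
  set Fam : Finset (Finset X) :=
    (t.filter (fun S => ε S = 1)).image (fun S => F.filter (· ∈ S)) with hFam
  refine ⟨e.symm (F, Fam), fun S hS => ?_⟩
  have hchi : chi e S (e.symm (F, Fam)) =
      if F.filter (· ∈ S) ∈ Fam then 1 else 0 := by
    simp only [chi, Equiv.apply_symm_apply]
  rw [hchi]
  have hmem_iff : F.filter (· ∈ S) ∈ Fam ↔ ε S = 1 := by
    rw [hFam, Finset.mem_image]
    constructor
    · rintro ⟨T, hT, hTe⟩
      obtain ⟨hTt, hT1⟩ := Finset.mem_filter.mp hT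
      rwa [sepF T hTt S hS hTe] at hT1
    · intro h1
      exact ⟨S, Finset.mem_filter.mpr ⟨hS, h1⟩, rfl⟩
  have h2 : ε S = 0 ∨ ε S = 1 := by omega
  rcases h2 with h | h
  · rw [if_neg, h]; rw [hmem_iff, h]; exact zero_ne_one
  · rw [if_pos (hmem_iff.mpr h), h]

open Classical in
lemma chi_wd {X : Type*} [Infinite X] (e : X ≃ Finset X × Finset (Finset X))
    (α β : Op (Fin 2)) (x : α.supp → (X → Fin 2)) (y : β.supp → (X → Fin 2))
    (hx : ∀ i, x i ∈ Set.range (chi e)) (hy : ∀ j, y j ∈ Set.range (chi e))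
    (h : (powOp X α).op x = (powOp X β).op y) (f : (X → Fin 2) → (X → Fin 2)) :
    (powOp X α).op (fun i => f (x i)) = (powOp X β).op (fun j => f (y j)) := by
  classical
  set Sx : α.supp → Set X := fun i => (hx i).choose with hSx
  have hSxs : ∀ i, chi e (Sx i) = x i := fun i => (hx i).choose_spec
  set Sy : β.supp → Set X := fun j => (hy j).choose with hSy
  have hSys : ∀ j, chi e (Sy j) = y j := fun j => (hy j).choose_spec
  funext p
  obtain ⟨q, hq⟩ := chi_sep e ((Finset.univ.image Sx) ∪ (Finset.univ.image Sy))
    (fun S => f (chi e S) p)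
  have hxq : ∀ i, f (x i) p = x i q := by
    intro i
    have := hq (Sx i) (Finset.mem_union_left _
      (Finset.mem_image.mpr ⟨i, Finset.mem_univ i, rfl⟩))
    rw [hSxs i] at this
    exact this.symm
  have hyq : ∀ j, f (y j) p = y j q := by
    intro j
    have := hq (Sy j) (Finset.mem_union_right _
      (Finset.mem_image.mpr ⟨j, Finset.mem_univ j, rfl⟩))
    rw [hSys j] at this
    exact this.symm
  show α.op (fun i => f (x i) p) = β.op (fun j => f (y j) p)
  calc α.op (fun i => f (x i) p) = α.op (fun i => x i q) := by
        congr 1; funext i; exact hxq i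
    _ = β.op (fun j => y j q) := congrFun h q
    _ = β.op (fun j => f (y j) p) := by congr 1; funext j; exact (hyq j).symm

/-- for every infinite set `X`, the power `2^X` of the Boolean
clone (of all finitary operations on `{0, 1}`) contains a `ℬ^X`-free subset of
cardinality `2^{|X|}`. -/
theorem exists_large_free_subset_of_boolean_power (X : Type*) [Infinite X] :
    ∃ B : Set (X → Fin 2),
      IsFree (Set.range (powOp X : Op (Fin 2) → Op (X → Fin 2))) B ∧
      Cardinal.mk B = 2 ^ Cardinal.mk X := by
  classical
  obtain ⟨e⟩ : Nonempty (X ≃ Finset X × Finset (Finset X)) := by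
    rw [← Cardinal.eq]
    simp [Cardinal.mk_finset_of_infinite,
      Cardinal.mul_eq_self (Cardinal.infinite_iff.mp ‹_›)]
  refine ⟨Set.range (chi e), ?_, ?_⟩
  · intro f
    refine ⟨fun a =>
      if h : ∃ p : Σ α₀ : Op (Fin 2), (powOp X α₀).supp → (X → Fin 2),
          (∀ i, p.2 i ∈ Set.range (chi e)) ∧ (powOp X p.1).op p.2 = a then
        (powOp X h.choose.1).op (fun i => f (h.choose.2 i))
      else a, ?_⟩
    rintro α ⟨α₀, rfl⟩ x hx
    have hex : ∃ p : Σ γ : Op (Fin 2), (powOp X γ).supp → (X → Fin 2),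
        (∀ i, p.2 i ∈ Set.range (chi e)) ∧
          (powOp X p.1).op p.2 = (powOp X α₀).op x := ⟨⟨α₀, x⟩, hx, rfl⟩
    simp only [dif_pos hex]
    exact chi_wd e hex.choose.1 α₀ hex.choose.2 x hex.choose_spec.1 hx
      hex.choose_spec.2 f
  · rw [Cardinal.mk_range_eq _ (chi_injective e), Cardinal.mk_set]
end
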